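/- With τ : ||X|| → ||X × S|| the map induced by barycentric subdivision (sending (x, A₀⊂...⊂A_k, t) ↦ (u*x, |A₀|<...<|A_k|, t) with u(j) = max(A_j)) and π : ||X × S|| → ||X|| the canonical projection, the composition π ∘ τ is homotopic to the identity of ||X||, via the linear homotopy from the identity of each subdivided simplex to the last-vertex map Sd(Δ^n) → Δ^n. -/

import Mathlib

open Set

/-- A simplicial space: spaces `X n` of `n`-simplices and a continuous, functorial
action of the monotone maps `[m] → [n]`. -/
structure SimpSpace where
  X : ℕ → Type
  [top : ∀ n, TopologicalSpace (X n)]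
  map : ∀ {m n : ℕ}, (Fin (m + 1) →o Fin (n + 1)) → X n → X m
  continuous_map : ∀ {m n : ℕ} (φ : Fin (m + 1) →o Fin (n + 1)), Continuous (map φ)
  map_id : ∀ (n : ℕ) (x : X n), map (OrderHom.id (α := Fin (n + 1))) x = x
  map_comp : ∀ {m n p : ℕ} (φ : Fin (m + 1) →o Fin (n + 1))
    (ψ : Fin (n + 1) →o Fin (p + 1)) (x : X p), map φ (map ψ x) = map (ψ.comp φ) x

attribute [instance] SimpSpace.top

/-- Strictly increasing sequences `[k] → ℕ`: the `k`-simplices of the semi-simplicial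
set `S`. -/
def SIdx (k : ℕ) : Type := {g : Fin (k + 1) → ℕ // StrictMono g}

instance (k : ℕ) : TopologicalSpace (SIdx k) := ⊥

/-- Total space of the fat realization `||X||`. -/
def FatTotal (X : SimpSpace) : Type :=
  Σ n : ℕ, X.X n × ↥(stdSimplex ℝ (Fin (n + 1)))

instance (X : SimpSpace) : TopologicalSpace (FatTotal X) :=
  inferInstanceAs (TopologicalSpace (Σ n : ℕ, X.X n × ↥(stdSimplex ℝ (Fin (n + 1)))))

/-- Face identifications: identifications along strictly increasing maps only. -/
def fatRel (X : SimpSpace) : FatTotal X → FatTotal X → Prop :=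
  fun a b => ∃ (m n : ℕ) (φ : Fin (m + 1) → Fin (n + 1)) (hφ : StrictMono φ)
    (x : X.X n) (t : stdSimplex ℝ (Fin (m + 1))) (t' : stdSimplex ℝ (Fin (n + 1))),
    (∀ i, (t' : Fin (n + 1) → ℝ) i =
        ∑ j, if φ j = i then (t : Fin (m + 1) → ℝ) j else 0) ∧
    a = ⟨m, X.map ⟨φ, hφ.monotone⟩ x, t⟩ ∧ b = ⟨n, x, t'⟩

/-- The fat realization `||X||`. -/
def FatReal (X : SimpSpace) : Type := Quot (fatRel X)

instance (X : SimpSpace) : TopologicalSpace (FatReal X) :=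
  inferInstanceAs (TopologicalSpace (Quot (fatRel X)))

/-- Total space of the fat realization `||X × S||`. -/
def FatSTotal (X : SimpSpace) : Type :=
  Σ n : ℕ, (X.X n × SIdx n) × ↥(stdSimplex ℝ (Fin (n + 1)))

instance (X : SimpSpace) : TopologicalSpace (FatSTotal X) :=
  inferInstanceAs
    (TopologicalSpace (Σ n : ℕ, (X.X n × SIdx n) × ↥(stdSimplex ℝ (Fin (n + 1)))))

/-- Face identifications for `X × S`. -/
def fatSRel (X : SimpSpace) : FatSTotal X → FatSTotal X → Prop :=
  fun a b => ∃ (m n : ℕ) (φ : Fin (m + 1) → Fin (n + 1)) (hφ : StrictMono φ)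
    (x : X.X n) (g : SIdx n)
    (t : stdSimplex ℝ (Fin (m + 1))) (t' : stdSimplex ℝ (Fin (n + 1))),
    (∀ i, (t' : Fin (n + 1) → ℝ) i =
        ∑ j, if φ j = i then (t : Fin (m + 1) → ℝ) j else 0) ∧
    a = ⟨m, (X.map ⟨φ, hφ.monotone⟩ x, ⟨g.1 ∘ φ, g.2.comp hφ⟩), t⟩ ∧ b = ⟨n, (x, g), t'⟩

/-- The fat realization `||X × S||`. -/
def FatSReal (X : SimpSpace) : Type := Quot (fatSRel X)

instance (X : SimpSpace) : TopologicalSpace (FatSReal X) :=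
  inferInstanceAs (TopologicalSpace (Quot (fatSRel X)))

/-- A `k`-simplex of the barycentric subdivision `Sd Δ^n`: a strictly increasing
chain `A₀ ⊊ A₁ ⊊ ... ⊊ A_k` of nonempty subsets of `[n]`. -/
def SdChain (n k : ℕ) : Type :=
  {A : Fin (k + 1) → Finset (Fin (n + 1)) //
    (∀ j, (A j).Nonempty) ∧ ∀ i j, i < j → A i ⊂ A j}

/-- The monotone map `u : [k] → [n]`, `j ↦ max A_j`, of a chain. -/
def maxMap {n k : ℕ} (A : SdChain n k) : Fin (k + 1) →o Fin (n + 1) where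
  toFun j := (A.1 j).max' (A.2.1 j)
  monotone' i j hij := by
    rcases eq_or_lt_of_le hij with rfl | h
    · exact le_refl _
    · exact Finset.max'_subset _ (A.2.2 i j h).subset

/-- The strictly increasing sequence `|A₀| < |A₁| < ... < |A_k|` of a chain. -/
def cardSeq {n k : ℕ} (A : SdChain n k) : SIdx k :=
  ⟨fun j => (A.1 j).card, fun i j hij => Finset.card_lt_card (A.2.2 i j hij)⟩

/-- The point of `Δ^n` corresponding to a point `t` of the subdivision simplex of the
chain `A`, i.e. `∑ⱼ tⱼ · (barycenter of A_j)`. -/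
noncomputable def sdPoint {n k : ℕ} (A : SdChain n k)
    (t : stdSimplex ℝ (Fin (k + 1))) : ↥(stdSimplex ℝ (Fin (n + 1))) :=
  ⟨fun v => ∑ j, (t : Fin (k + 1) → ℝ) j *
      (if v ∈ A.1 j then ((A.1 j).card : ℝ)⁻¹ else 0), by
    constructor
    · intro v
      refine Finset.sum_nonneg fun j _ => mul_nonneg (t.2.1 j) ?_
      split
      · positivity
      · exact le_refl 0
    · rw [Finset.sum_comm]
      have h : ∀ j : Fin (k + 1),
          (∑ v, (t : Fin (k + 1) → ℝ) j *
            (if v ∈ A.1 j then ((A.1 j).card : ℝ)⁻¹ else 0)) = (t : Fin (k + 1) → ℝ) j := by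
        intro j
        rw [← Finset.mul_sum, Finset.sum_ite_mem, Finset.univ_inter, Finset.sum_const,
          nsmul_eq_mul, mul_inv_cancel₀, mul_one]
        exact_mod_cast Finset.card_ne_zero.2 (A.2.1 j)
      rw [Finset.sum_congr rfl fun j _ => h j]
      exact t.2.2⟩

/-- The canonical projection `π : ||X × S|| → ||X||`. -/
def piFat (X : SimpSpace) : C(FatSReal X, FatReal X) :=
  ⟨Quot.lift (fun a => Quot.mk (fatRel X) ⟨a.1, a.2.1.1, a.2.2⟩)
    (by
      rintro a b ⟨m, n, φ, hφ, x, g, t, t', ht, rfl, rfl⟩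
      exact Quot.sound ⟨m, n, φ, hφ, x, t, t', ht, rfl, rfl⟩),
   by
    refine continuous_quot_lift _ (continuous_quot_mk.comp ?_)
    refine continuous_sigma fun n => ?_
    exact (continuous_sigmaMk (ι := ℕ)
        (σ := fun n => X.X n × ↥(stdSimplex ℝ (Fin (n + 1))))).comp
      ((continuous_fst.comp continuous_fst).prodMk continuous_snd)⟩

/-!
Write a point of `‖X‖` as `[x, s]` with `x ∈ X n` and `s ∈ Δ^n`, and let `ρ` list the vertices
of `Δ^n` by decreasing coordinate of `s`. Then `s` lies in the simplex of `Sd Δ^n` spanned by the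
flag `{ρ 0} ⊂ {ρ 0, ρ 1} ⊂ ⋯`, with barycentric coordinates
`t j = (j + 1) (s (ρ j) - s (ρ (j + 1)))`, so `π (τ [x, s]) = [u^* x, t]` where
`u j = max {ρ 0, …, ρ j}`.

Since `u` is only monotone, the straight line from `[u^* x, t]` to `[x, s]` is drawn in a
`(2n + 1)`-simplex: the join `[n] * [n]`, mapped to `[n]` by `u` on the first factor and by the
identity on the second, with the vertices interleaved so that this map is monotone. Pulling `x`
back along it and taking the point `(1 - θ) t ⊕ θ s` gives the homotopy. A point of `‖X‖` only sees
the vertices in the support of its coordinates, and on that support the interleaving is determined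
by `s` alone; this makes the construction independent of `ρ` when `s` has repeated coordinates and
compatible with the face identifications. For a fixed `ρ` it is continuous on the closed set of
the `s` that `ρ` sorts, and finitely many such sets cover `Δ^n`.
-/

local notation "Δ" n:max => Set.Elem (stdSimplex ℝ (Fin (n + 1)))

namespace stdSimplex

variable {S : Type*} [Semiring S] [PartialOrder S] [IsOrderedRing S] {ι κ : Type*} [Fintype ι]
  [Fintype κ]

theorem map_apply_eq_sum_ite [DecidableEq κ] (f : ι → κ) (t : stdSimplex S ι) (k : κ) :
    map f t k = ∑ i, if f i = k then t i else 0 := by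
  rw [map_coe, FunOnFinite.linearMap_apply_apply, Finset.sum_filter]

theorem map_apply_of_injective {f : ι → κ} (hf : f.Injective) (t : stdSimplex S ι) (i : ι) :
    map f t (f i) = t i := by
  classical
  rw [map_apply_eq_sum_ite, Finset.sum_eq_single i (fun j _ hj => if_neg (hf.ne hj)) (by simp),
    if_pos rfl]

theorem map_apply_of_notMem_range {f : ι → κ} (t : stdSimplex S ι) {k : κ} (hk : k ∉ range f) :
    map f t k = 0 := by
  classical
  rw [map_apply_eq_sum_ite]
  exact Finset.sum_eq_zero fun i _ => if_neg fun h => hk ⟨i, h⟩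

theorem eq_map_of_comp_eq {f : ι → κ} (hf : f.Injective) {t : stdSimplex S ι}
    {u : stdSimplex S κ} (hu : ∀ i, u (f i) = t i) (hu' : ∀ k ∉ range f, u k = 0) :
    u = map f t := by
  ext k
  by_cases hk : k ∈ range f
  · obtain ⟨i, rfl⟩ := hk
    rw [hu, map_apply_of_injective hf]
  · rw [hu' k hk, map_apply_of_notMem_range t hk]

theorem exists_eq_map_of_support_subset {f : ι → κ} (hf : f.Injective) (u : stdSimplex S κ)
    (hu : ∀ k, u k ≠ 0 → k ∈ range f) : ∃ t : stdSimplex S ι, u = map f t := by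
  have hu' : ∀ k ∉ range f, u k = 0 := fun k hk => by_contra fun h => hk (hu k h)
  refine ⟨⟨fun i => u (f i), fun i => zero_le u _, ?_⟩, eq_map_of_comp_eq hf (fun _ => rfl) hu'⟩
  rw [← sum_eq_one u]
  exact Fintype.sum_of_injective f hf _ _ hu' fun _ => rfl

end stdSimplex

namespace FatReal

variable {X : SimpSpace}

def mk {n : ℕ} (x : X.X n) (t : Δ n) : FatReal X := Quot.mk (fatRel X) ⟨n, x, t⟩

theorem continuous_mk (n : ℕ) : Continuous fun p : X.X n × Δ n => mk p.1 p.2 :=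
  continuous_quot_mk.comp (continuous_sigmaMk (σ := fun n => X.X n × Δ n))

theorem mk_map_eq {m n : ℕ} {φ : Fin (m + 1) → Fin (n + 1)} (hφ : StrictMono φ) (x : X.X n)
    (t : Δ m) : mk (X.map ⟨φ, hφ.monotone⟩ x) t = mk x (stdSimplex.map φ t) := by
  classical
  exact Quot.sound ⟨m, n, φ, hφ, x, t, _, stdSimplex.map_apply_eq_sum_ite φ t, rfl, rfl⟩

theorem mk_map_map_eq {k r n : ℕ} (W : Fin (k + 1) →o Fin (n + 1))
    {ι : Fin (r + 1) → Fin (k + 1)} (hι : StrictMono ι) (x : X.X n) (t : Δ r) :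
    mk (X.map W x) (stdSimplex.map ι t) = mk (X.map (W.comp ⟨ι, hι.monotone⟩) x) t := by
  rw [← mk_map_eq hι, X.map_comp]

/-- Both sides are the point `t` restricted to its support, on the corresponding face of `x`. -/
theorem mk_map_eq_mk_map_of_strictMonoOn {n k k' : ℕ} {W : Fin (k + 1) →o Fin (n + 1)}
    {W' : Fin (k' + 1) →o Fin (n + 1)} (x : X.X n) {t : Δ k} {t' : Δ k'}
    {g : Fin (k + 1) → Fin (k' + 1)} (hg : StrictMonoOn g {i | t i ≠ 0})
    (hW : ∀ i, t i ≠ 0 → W' (g i) = W i) (ht : ∀ i, t' (g i) = t i)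
    (ht' : ∀ i', t' i' ≠ 0 → i' ∈ range g) :
    mk (X.map W x) t = mk (X.map W' x) t' := by
  classical
  set S := Finset.univ.filter fun i => t i ≠ 0
  obtain ⟨r, hr⟩ : ∃ r, S.card = r + 1 := Nat.exists_eq_add_one.mpr <| Finset.card_pos.mpr <|
    let ⟨i, hi⟩ := Finset.exists_ne_zero_of_sum_ne_zero
      ((stdSimplex.sum_eq_one t).trans_ne one_ne_zero)
    ⟨i, by simpa [S] using hi.2⟩
  set ι := S.orderEmbOfFin hr
  have hιS (j : Fin (r + 1)) : t (ι j) ≠ 0 := (Finset.mem_filter.mp (S.orderEmbOfFin_mem hr j)).2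
  have hgι : StrictMono (g ∘ ι) := fun i j hij => hg (hιS i) (hιS j) (ι.strictMono hij)
  obtain ⟨s, hs⟩ := stdSimplex.exists_eq_map_of_support_subset ι.injective t fun i hi => by
    rw [Finset.range_orderEmbOfFin]
    simpa [S] using hi
  have hs' : t' = stdSimplex.map (g ∘ ι) s := by
    refine stdSimplex.eq_map_of_comp_eq hgι.injective (fun j => ?_) fun i' hi' => ?_
    · rw [Function.comp_apply, ht, hs, stdSimplex.map_apply_of_injective ι.injective]
    · by_contra h
      obtain ⟨i, rfl⟩ := ht' i' h
      have hi : t i ≠ 0 := ht i ▸ h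
      obtain ⟨j, rfl⟩ : i ∈ range ι := by
        rw [Finset.range_orderEmbOfFin]
        simpa [S] using hi
      exact hi' ⟨j, rfl⟩
  rw [hs, hs', mk_map_map_eq W ι.strictMono, mk_map_map_eq W' hgι]
  congr 2
  ext j
  exact congrArg Fin.val (hW _ (hιS j)).symm

end FatReal

open unitInterval

namespace stdSimplex

variable {ι κ : Type*} [Fintype ι] [Fintype κ]

noncomputable def join (θ : I) (t : stdSimplex ℝ ι) (s : stdSimplex ℝ κ) :
    stdSimplex ℝ (ι ⊕ κ) :=
  ⟨Sum.elim (fun i => (1 - θ) * t i) (fun k => θ * s k),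
    fun v => v.rec (fun i => mul_nonneg (one_minus_nonneg θ) (zero_le t i))
      (fun k => mul_nonneg θ.2.1 (zero_le s k)),
    by simp [Fintype.sum_sum_type, ← Finset.mul_sum]⟩

theorem continuous_join :
    Continuous fun q : I × stdSimplex ℝ ι × stdSimplex ℝ κ => join q.1 q.2.1 q.2.2 := by
  refine Continuous.subtype_mk (continuous_pi fun v => ?_) _
  have hθ : Continuous fun q : I × stdSimplex ℝ ι × stdSimplex ℝ κ => (q.1 : ℝ) := by fun_prop
  rcases v with i | k
  · exact (continuous_const.sub hθ).mul
      ((continuous_apply i).comp (continuous_subtype_val.comp (by fun_prop)))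
  · exact hθ.mul ((continuous_apply k).comp (continuous_subtype_val.comp (by fun_prop)))

end stdSimplex

section Join

variable {p n : ℕ}

/-- The vertices of the join `[p] * [n]`, ordered lexicographically by the vertex `a j` or `i`
of `[n]` they lie over and then with `[p]` before `[n]`. -/
def JoinVertex (_a : Fin (p + 1) →o Fin (n + 1)) : Type := Fin (p + 1) ⊕ Fin (n + 1)

namespace JoinVertex

variable (a : Fin (p + 1) →o Fin (n + 1))

def key (v : JoinVertex a) : ℕ ×ₗ ℕ :=
  Sum.elim (fun j : Fin (p + 1) => toLex ((a j : ℕ), (j : ℕ)))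
    (fun i : Fin (n + 1) => toLex ((i : ℕ), p + 1)) v

theorem key_injective : Function.Injective (key a) := by
  rintro (j | i) (j' | i') h <;> simp only [key, Sum.elim_inl, Sum.elim_inr,
    EmbeddingLike.apply_eq_iff_eq, Prod.mk.injEq] at h
  · exact congrArg Sum.inl (Fin.ext h.2)
  · omega
  · omega
  · exact congrArg Sum.inr (Fin.ext h.1)

instance : LinearOrder (JoinVertex a) := LinearOrder.lift' (key a) (key_injective a)

instance : Fintype (JoinVertex a) := inferInstanceAs (Fintype (Fin (p + 1) ⊕ Fin (n + 1)))

def inl (j : Fin (p + 1)) : JoinVertex a := Sum.inl j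

def inr (i : Fin (n + 1)) : JoinVertex a := Sum.inr i

theorem inl_or_inr (v : JoinVertex a) : (∃ j, v = inl a j) ∨ ∃ i, v = inr a i := by
  rcases v with j | i
  exacts [.inl ⟨j, rfl⟩, .inr ⟨i, rfl⟩]

def base : JoinVertex a →o Fin (n + 1) where
  toFun := Sum.elim a id
  monotone' v w h := by
    have := Prod.Lex.monotone_fst _ _ (show key a v ≤ key a w from h)
    rcases v with j | i <;> rcases w with j' | i' <;> exact this

@[simp] theorem base_inl (j : Fin (p + 1)) : base a (inl a j) = a j := rfl

@[simp] theorem base_inr (i : Fin (n + 1)) : base a (inr a i) = i := rfl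

def enum : Fin (p + n + 1 + 1) ≃o JoinVertex a :=
  Fintype.orderIsoFinOfCardEq _ <| by
    rw [show Fintype.card (JoinVertex a) = Fintype.card (Fin (p + 1) ⊕ Fin (n + 1)) from rfl]
    simp only [Fintype.card_sum, Fintype.card_fin]
    omega

variable {a}

theorem inl_lt_inl {j j' : Fin (p + 1)} : inl a j < inl a j' ↔ j < j' := by
  change key a (inl a j) < key a (inl a j') ↔ _
  simp only [key, inl, Sum.elim_inl, Prod.Lex.toLex_lt_toLex, Fin.val_fin_lt, Fin.val_inj]
  refine ⟨fun h => h.elim a.monotone.reflect_lt And.right, fun h => ?_⟩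
  rcases (a.monotone h.le).lt_or_eq with h' | h'
  exacts [.inl h', .inr ⟨h', h⟩]

theorem inl_lt_inr {j : Fin (p + 1)} {i : Fin (n + 1)} : inl a j < inr a i ↔ a j ≤ i := by
  change key a (inl a j) < key a (inr a i) ↔ _
  simp only [key, inl, inr, Sum.elim_inl, Sum.elim_inr, Prod.Lex.toLex_lt_toLex,
    Fin.le_iff_val_le_val]
  omega

theorem inr_lt_inl {j : Fin (p + 1)} {i : Fin (n + 1)} : inr a i < inl a j ↔ i < a j := by
  change key a (inr a i) < key a (inl a j) ↔ _
  simp only [key, inl, inr, Sum.elim_inl, Sum.elim_inr, Prod.Lex.toLex_lt_toLex, Fin.lt_def]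
  omega

theorem inr_lt_inr {i i' : Fin (n + 1)} : inr a i < inr a i' ↔ i < i' := by
  change key a (inr a i) < key a (inr a i') ↔ _
  simp only [key, inr, Sum.elim_inr, Prod.Lex.toLex_lt_toLex, Fin.lt_def]
  omega

variable {q m : ℕ} {b : Fin (q + 1) →o Fin (m + 1)} {ψ : Fin (p + 1) → Fin (q + 1)}
  {φ : Fin (n + 1) → Fin (m + 1)}

variable (b ψ φ) in
def map : JoinVertex a → JoinVertex b := Sum.map ψ φ

@[simp] theorem map_inl (j : Fin (p + 1)) : map b ψ φ (inl a j) = inl b (ψ j) := rfl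

@[simp] theorem map_inr (i : Fin (n + 1)) : map b ψ φ (inr a i) = inr b (φ i) := rfl

theorem strictMonoOn_map (hψ : StrictMono ψ) (hφ : StrictMono φ) :
    StrictMonoOn (map b ψ φ) {v : JoinVertex a | base b (map b ψ φ v) = φ (base a v)} := by
  intro v hv w hw hvw
  rcases inl_or_inr a v with ⟨j, rfl⟩ | ⟨i, rfl⟩ <;>
    rcases inl_or_inr a w with ⟨j', rfl⟩ | ⟨i', rfl⟩ <;>
    simp only [map_inl, map_inr, base_inl, base_inr, mem_ofPred_eq] at hv hw hvw ⊢
  · exact inl_lt_inl.mpr (hψ (inl_lt_inl.mp hvw))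
  · exact inl_lt_inr.mpr (hv ▸ hφ.monotone (inl_lt_inr.mp hvw))
  · exact inr_lt_inl.mpr (hw ▸ hφ (inr_lt_inl.mp hvw))
  · exact inr_lt_inr.mpr (hφ (inr_lt_inr.mp hvw))

end JoinVertex

open JoinVertex

def joinMap (a : Fin (p + 1) →o Fin (n + 1)) : Fin (p + n + 1 + 1) →o Fin (n + 1) :=
  (base a).comp (enum a : Fin (p + n + 1 + 1) →o JoinVertex a)

noncomputable def joinCoord (a : Fin (p + 1) →o Fin (n + 1)) (θ : I) (t : Δ p) (s : Δ n) :
    Δ (p + n + 1) :=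
  stdSimplex.map (enum a).symm (stdSimplex.join θ t s)

section

variable (a : Fin (p + 1) →o Fin (n + 1)) (θ : I) (t : Δ p) (s : Δ n)

@[simp]
theorem joinMap_enum_symm (v : JoinVertex a) : joinMap a ((enum a).symm v) = base a v := by
  simp [joinMap]

@[simp]
theorem joinCoord_inl (j : Fin (p + 1)) :
    joinCoord a θ t s ((enum a).symm (inl a j)) = (1 - θ) * t j :=
  stdSimplex.map_apply_of_injective (enum a).symm.injective _ (Sum.inl j)

@[simp]
theorem joinCoord_inr (i : Fin (n + 1)) : joinCoord a θ t s ((enum a).symm (inr a i)) = θ * s i :=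
  stdSimplex.map_apply_of_injective (enum a).symm.injective _ (Sum.inr i)

end

variable {X : SimpSpace}

noncomputable def joinPoint (a : Fin (p + 1) →o Fin (n + 1)) (x : X.X n) (θ : I) (t : Δ p)
    (s : Δ n) : FatReal X :=
  FatReal.mk (X.map (joinMap a) x) (joinCoord a θ t s)

theorem continuous_joinPoint (a : Fin (p + 1) →o Fin (n + 1)) :
    Continuous fun q : X.X n × I × Δ p × Δ n => joinPoint a q.1 q.2.1 q.2.2.1 q.2.2.2 :=
  (FatReal.continuous_mk _).comp <| ((X.continuous_map _).comp continuous_fst).prodMk <|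
    (stdSimplex.continuous_map _).comp (stdSimplex.continuous_join.comp continuous_snd)

theorem joinPoint_zero (a : Fin (p + 1) →o Fin (n + 1)) (x : X.X n) (t : Δ p) (s : Δ n) :
    joinPoint a x 0 t s = FatReal.mk (X.map a x) t := by
  refine (FatReal.mk_map_eq_mk_map_of_strictMonoOn x (g := (enum a).symm ∘ inl a)
    (((enum a).symm.strictMono.comp fun _ _ => inl_lt_inl.mpr).strictMonoOn _)
    (fun j _ => by simp) (fun j => by simp) fun k hk => ?_).symm
  obtain ⟨v, rfl⟩ := (enum a).symm.surjective k
  rcases inl_or_inr a v with ⟨j, rfl⟩ | ⟨i, rfl⟩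
  · exact ⟨j, rfl⟩
  · simp at hk

theorem joinPoint_one (a : Fin (p + 1) →o Fin (n + 1)) (x : X.X n) (t : Δ p) (s : Δ n) :
    joinPoint a x 1 t s = FatReal.mk x s := by
  refine (X.map_id n x ▸ FatReal.mk_map_eq_mk_map_of_strictMonoOn x
    (g := (enum a).symm ∘ inr a)
    (((enum a).symm.strictMono.comp fun _ _ => inr_lt_inr.mpr).strictMonoOn _)
    (fun i _ => by simp) (fun i => by simp) fun k hk => ?_).symm
  obtain ⟨v, rfl⟩ := (enum a).symm.surjective k
  rcases inl_or_inr a v with ⟨j, rfl⟩ | ⟨i, rfl⟩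
  · simp at hk
  · exact ⟨i, rfl⟩

section map

variable {m q : ℕ} {a : Fin (p + 1) →o Fin (m + 1)} {b : Fin (q + 1) →o Fin (n + 1)}
  {φ : Fin (m + 1) → Fin (n + 1)} {ψ : Fin (p + 1) → Fin (q + 1)} {θ : I} {t : Δ p} {s : Δ m}

theorem base_map_of_joinCoord_ne_zero (hab : ∀ j, t j ≠ 0 → b (ψ j) = φ (a j)) {v : JoinVertex a}
    (hv : joinCoord a θ t s ((enum a).symm v) ≠ 0) :
    base b (JoinVertex.map b ψ φ v) = φ (base a v) := by
  rcases inl_or_inr a v with ⟨j, rfl⟩ | ⟨i, rfl⟩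
  · simpa using hab j (right_ne_zero_of_mul (by simpa using hv))
  · rfl

theorem joinPoint_map_eq (hφ : StrictMono φ) (hψ : StrictMono ψ) (x : X.X n)
    (hab : ∀ j, t j ≠ 0 → b (ψ j) = φ (a j)) :
    joinPoint a (X.map ⟨φ, hφ.monotone⟩ x) θ t s =
      joinPoint b x θ (stdSimplex.map ψ t) (stdSimplex.map φ s) := by
  unfold joinPoint
  rw [X.map_comp]
  refine FatReal.mk_map_eq_mk_map_of_strictMonoOn x
    (g := (enum b).symm ∘ JoinVertex.map b ψ φ ∘ enum a) (fun k hk k' hk' hkk' => ?_)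
    (fun k hk => ?_) (fun k => ?_) fun k' hk' => ?_
  · obtain ⟨v, rfl⟩ := (enum a).symm.surjective k
    obtain ⟨w, rfl⟩ := (enum a).symm.surjective k'
    simp only [Function.comp_apply, OrderIso.apply_symm_apply, OrderIso.lt_iff_lt] at hkk' ⊢
    exact strictMonoOn_map hψ hφ (base_map_of_joinCoord_ne_zero hab hk)
      (base_map_of_joinCoord_ne_zero hab hk') hkk'
  · obtain ⟨v, rfl⟩ := (enum a).symm.surjective k
    simpa using base_map_of_joinCoord_ne_zero hab hk
  · obtain ⟨v, rfl⟩ := (enum a).symm.surjective k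
    rcases inl_or_inr a v with ⟨j, rfl⟩ | ⟨i, rfl⟩
    · simp [stdSimplex.map_apply_of_injective hψ.injective]
    · simp [stdSimplex.map_apply_of_injective hφ.injective]
  · obtain ⟨v', rfl⟩ := (enum b).symm.surjective k'
    rcases inl_or_inr b v' with ⟨j', rfl⟩ | ⟨i', rfl⟩
    · obtain ⟨j, rfl⟩ : j' ∈ range ψ := by_contra fun h =>
        hk' (by simp [stdSimplex.map_apply_of_notMem_range t h])
      exact ⟨(enum a).symm (inl a j), by simp⟩
    · obtain ⟨i, rfl⟩ : i' ∈ range φ := by_contra fun h =>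
        hk' (by simp [stdSimplex.map_apply_of_notMem_range s h])
      exact ⟨(enum a).symm (inr a i), by simp⟩

end map

end Join

open OrderDual in
theorem Tuple.comp_perm_eq_of_antitone {α : Type*} [LinearOrder α] {n : ℕ} {f : Fin n → α}
    {ρ ρ' : Equiv.Perm (Fin n)} (hρ : Antitone (f ∘ ρ)) (hρ' : Antitone (f ∘ ρ')) :
    f ∘ ρ = f ∘ ρ' := by
  have h := (Tuple.comp_sort_eq_comp_iff_monotone (f := toDual ∘ f)).mpr hρ.dual_right
  have h' := (Tuple.comp_sort_eq_comp_iff_monotone (f := toDual ∘ f)).mpr hρ'.dual_right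
  exact congrArg (ofDual ∘ ·) (h.trans h'.symm)

section Flag

variable {m n : ℕ}

noncomputable def sdWeight {k : ℕ} (A : SdChain n k) (j : Fin (k + 1)) (v : Fin (n + 1)) : ℝ :=
  if v ∈ A.1 j then ((A.1 j).card : ℝ)⁻¹ else 0

theorem sdPoint_apply {k : ℕ} (A : SdChain n k) (t : Δ k) (v : Fin (n + 1)) :
    sdPoint A t v = ∑ j, t j * sdWeight A j v :=
  rfl

theorem sum_sdWeight {k : ℕ} (A : SdChain n k) (j : Fin (k + 1)) : ∑ v, sdWeight A j v = 1 := by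
  simp only [sdWeight]
  rw [Finset.sum_ite_mem, Finset.univ_inter, Finset.sum_const, nsmul_eq_mul, mul_inv_cancel₀]
  exact_mod_cast (A.2.1 j).card_pos.ne'

open OrderDual in
noncomputable def antiSort (s : Δ n) : Equiv.Perm (Fin (n + 1)) := Tuple.sort (toDual ∘ s)

theorem antitone_comp_antiSort (s : Δ n) : Antitone (s ∘ antiSort s) :=
  monotone_toDual_comp_iff.mp (Tuple.monotone_sort _)

/-- The `j`-th largest coordinate of `s` when `ρ` sorts `s` decreasingly, and `0` for `n < j`. -/
noncomputable def sortedCoord (s : Δ n) (ρ : Equiv.Perm (Fin (n + 1))) (j : ℕ) : ℝ :=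
  if h : j < n + 1 then s (ρ ⟨j, h⟩) else 0

theorem sortedCoord_val (s : Δ n) (ρ : Equiv.Perm (Fin (n + 1))) (j : Fin (n + 1)) :
    sortedCoord s ρ j = s (ρ j) :=
  dif_pos j.isLt

theorem sortedCoord_of_le (s : Δ n) (ρ : Equiv.Perm (Fin (n + 1))) {j : ℕ} (hj : n + 1 ≤ j) :
    sortedCoord s ρ j = 0 :=
  dif_neg hj.not_gt

theorem sortedCoord_nonneg (s : Δ n) (ρ : Equiv.Perm (Fin (n + 1))) (j : ℕ) :
    0 ≤ sortedCoord s ρ j := by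
  unfold sortedCoord
  split
  exacts [stdSimplex.zero_le s _, le_rfl]

theorem antitone_sortedCoord {s : Δ n} {ρ : Equiv.Perm (Fin (n + 1))} (hρ : Antitone (s ∘ ρ)) :
    Antitone (sortedCoord s ρ) := by
  intro i j hij
  by_cases hj : j < n + 1
  · rw [sortedCoord, sortedCoord, dif_pos hj, dif_pos (hij.trans_lt hj)]
    exact hρ (Fin.mk_le_mk.mpr hij)
  · rw [sortedCoord_of_le s ρ (not_lt.mp hj)]
    exact sortedCoord_nonneg s ρ i

theorem sortedCoord_congr {s : Δ n} {ρ ρ' : Equiv.Perm (Fin (n + 1))} (hρ : Antitone (s ∘ ρ))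
    (hρ' : Antitone (s ∘ ρ')) : sortedCoord s ρ = sortedCoord s ρ' := by
  funext j
  unfold sortedCoord
  split
  · exact congrFun (Tuple.comp_perm_eq_of_antitone hρ hρ') _
  · rfl

theorem continuous_sortedCoord (ρ : Equiv.Perm (Fin (n + 1))) (j : ℕ) :
    Continuous fun s : Δ n => sortedCoord s ρ j := by
  unfold sortedCoord
  split
  exacts [(continuous_apply _).comp continuous_subtype_val, continuous_const]

section map

variable {φ : Fin (m + 1) → Fin (n + 1)} {s₀ : Δ m} {ρ₀ : Equiv.Perm (Fin (m + 1))}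
  {ε : Equiv.Perm (Fin (n + 1))} {hmn : m + 1 ≤ n + 1}

theorem map_apply_perm_of_le (hε : ∀ j, ε (Fin.castLE hmn j) = φ (ρ₀ j)) {j : Fin (n + 1)}
    (hj : m + 1 ≤ j) : stdSimplex.map φ s₀ (ε j) = 0 := by
  refine stdSimplex.map_apply_of_notMem_range _ fun ⟨i, hi⟩ => ?_
  obtain ⟨k, rfl⟩ := ρ₀.surjective i
  have := congrArg Fin.val (ε.injective ((hε k).trans hi))
  simp only [Fin.val_castLE] at this
  omega

theorem antitone_map_comp_perm (hφ : φ.Injective) (hρ₀ : Antitone (s₀ ∘ ρ₀))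
    (hε : ∀ j, ε (Fin.castLE hmn j) = φ (ρ₀ j)) : Antitone (stdSimplex.map φ s₀ ∘ ε) := by
  intro i j hij
  by_cases hj : (j : ℕ) < m + 1
  · obtain ⟨i, rfl⟩ : ∃ i' : Fin (m + 1), Fin.castLE hmn i' = i := ⟨⟨i, by omega⟩, rfl⟩
    obtain ⟨j, rfl⟩ : ∃ j' : Fin (m + 1), Fin.castLE hmn j' = j := ⟨⟨j, hj⟩, rfl⟩
    simp only [Function.comp_apply, hε, stdSimplex.map_apply_of_injective hφ]
    exact hρ₀ hij
  · rw [Function.comp_apply, map_apply_perm_of_le hε (not_lt.mp hj)]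
    exact stdSimplex.zero_le _ _

theorem sortedCoord_map_perm (hφ : φ.Injective) (hε : ∀ j, ε (Fin.castLE hmn j) = φ (ρ₀ j)) :
    sortedCoord (stdSimplex.map φ s₀) ε = sortedCoord s₀ ρ₀ := by
  funext j
  by_cases hj : j < m + 1
  · rw [sortedCoord, sortedCoord, dif_pos (by omega), dif_pos hj,
      show ε ⟨j, _⟩ = ε (Fin.castLE hmn ⟨j, hj⟩) from rfl, hε,
      stdSimplex.map_apply_of_injective hφ]
  · rw [sortedCoord_of_le s₀ ρ₀ (not_lt.mp hj), sortedCoord]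
    split
    · exact map_apply_perm_of_le hε (not_lt.mp hj)
    · rfl

end map

theorem sortedCoord_map {φ : Fin (m + 1) → Fin (n + 1)} (hφ : φ.Injective) {s₀ : Δ m}
    {ρ₀ : Equiv.Perm (Fin (m + 1))} {ρ : Equiv.Perm (Fin (n + 1))} (hρ₀ : Antitone (s₀ ∘ ρ₀))
    (hρ : Antitone (stdSimplex.map φ s₀ ∘ ρ)) :
    sortedCoord (stdSimplex.map φ s₀) ρ = sortedCoord s₀ ρ₀ := by
  have hmn : m + 1 ≤ n + 1 := Fin.le_of_injective φ hφ
  obtain ⟨ε, hε⟩ := Equiv.Perm.exists_extending_pair (Fin.castLE hmn) (φ ∘ ρ₀)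
    (Fin.castLE_injective hmn) (hφ.comp ρ₀.injective)
  rw [sortedCoord_congr hρ (antitone_map_comp_perm hφ hρ₀ hε), sortedCoord_map_perm hφ hε]

/-- The barycentric coordinates of `s` in the simplex of `Sd Δ^n` spanned by the flag of `ρ`. -/
noncomputable def flagCoord (s : Δ n) (ρ : Equiv.Perm (Fin (n + 1))) (j : Fin (n + 1)) : ℝ :=
  (j + 1) * (sortedCoord s ρ j - sortedCoord s ρ (j + 1))

theorem flagCoord_nonneg {s : Δ n} {ρ : Equiv.Perm (Fin (n + 1))} (hρ : Antitone (s ∘ ρ))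
    (j : Fin (n + 1)) : 0 ≤ flagCoord s ρ j :=
  mul_nonneg (by positivity) (sub_nonneg.mpr (antitone_sortedCoord hρ (Nat.le_succ j)))

theorem sortedCoord_lt_of_flagCoord_ne_zero {s : Δ n} {ρ : Equiv.Perm (Fin (n + 1))}
    (hρ : Antitone (s ∘ ρ)) {j : Fin (n + 1)} (hj : flagCoord s ρ j ≠ 0) :
    sortedCoord s ρ (j + 1) < sortedCoord s ρ j :=
  (antitone_sortedCoord hρ (Nat.le_succ j)).lt_of_ne fun h => hj (by simp [flagCoord, h])

theorem flagCoord_congr {s : Δ n} {ρ ρ' : Equiv.Perm (Fin (n + 1))} (hρ : Antitone (s ∘ ρ))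
    (hρ' : Antitone (s ∘ ρ')) : flagCoord s ρ = flagCoord s ρ' := by
  funext j
  simp only [flagCoord, sortedCoord_congr hρ hρ']

theorem continuous_flagCoord (ρ : Equiv.Perm (Fin (n + 1))) :
    Continuous fun s : Δ n => flagCoord s ρ :=
  continuous_pi fun j =>
    continuous_const.mul ((continuous_sortedCoord ρ j).sub (continuous_sortedCoord ρ _))

def flagChain (ρ : Equiv.Perm (Fin (n + 1))) : SdChain n n :=
  ⟨fun j => (Finset.Iic j).map ρ.toEmbedding,
    fun j => ⟨ρ j, Finset.mem_map_of_mem _ (Finset.mem_Iic.mpr le_rfl)⟩,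
    fun _ _ hij => Finset.map_ssubset_map.mpr (Finset.Iic_ssubset_Iic.mpr hij)⟩

theorem mem_flagChain {ρ : Equiv.Perm (Fin (n + 1))} {j v : Fin (n + 1)} :
    v ∈ (flagChain ρ).1 j ↔ ρ.symm v ≤ j := by
  simp [flagChain, Finset.mem_map_equiv]

theorem card_flagChain (ρ : Equiv.Perm (Fin (n + 1))) (j : Fin (n + 1)) :
    ((flagChain ρ).1 j).card = j + 1 := by
  simp [flagChain]

theorem sum_flagCoord_mul_sdWeight (s : Δ n) (ρ : Equiv.Perm (Fin (n + 1))) (v : Fin (n + 1)) :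
    ∑ j, flagCoord s ρ j * sdWeight (flagChain ρ) j v = s v := by
  have hterm (j : Fin (n + 1)) : flagCoord s ρ j * sdWeight (flagChain ρ) j v =
      if (ρ.symm v : ℕ) ≤ j then sortedCoord s ρ j - sortedCoord s ρ (j + 1) else 0 := by
    by_cases h : ρ.symm v ≤ j
    · rw [sdWeight, if_pos (mem_flagChain.mpr h), if_pos (Fin.le_def.mp h), card_flagChain,
        flagCoord]
      push_cast
      field_simp
    · rw [sdWeight, if_neg (mt mem_flagChain.mp h), if_neg (mt Fin.le_def.mpr h), mul_zero]
  rw [Finset.sum_congr rfl fun j _ => hterm j, Fin.sum_univ_eq_sum_range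
      (fun j => if (ρ.symm v : ℕ) ≤ j then sortedCoord s ρ j - sortedCoord s ρ (j + 1) else 0),
    ← Finset.sum_filter, Finset.range_eq_Ico, Finset.Ico_filter_le, max_eq_right (Nat.zero_le _),
    Finset.sum_Ico_eq_sum_range]
  refine (Finset.sum_range_sub' (fun k => sortedCoord s ρ (ρ.symm v + k)) _).trans ?_
  rw [Nat.add_sub_cancel' (ρ.symm v).isLt.le, sortedCoord_of_le s ρ le_rfl, add_zero, sub_zero,
    sortedCoord_val, Equiv.apply_symm_apply]

theorem sum_flagCoord (s : Δ n) (ρ : Equiv.Perm (Fin (n + 1))) : ∑ j, flagCoord s ρ j = 1 := by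
  calc ∑ j, flagCoord s ρ j
      = ∑ j, ∑ v, flagCoord s ρ j * sdWeight (flagChain ρ) j v := by
        simp only [← Finset.mul_sum, sum_sdWeight, mul_one]
    _ = ∑ v, s v := by rw [Finset.sum_comm]; simp only [sum_flagCoord_mul_sdWeight]
    _ = 1 := stdSimplex.sum_eq_one s

noncomputable def flagPoint (s : Δ n) : Δ n :=
  ⟨flagCoord s (antiSort s), flagCoord_nonneg (antitone_comp_antiSort s), sum_flagCoord s _⟩

theorem flagPoint_apply {s : Δ n} {ρ : Equiv.Perm (Fin (n + 1))} (hρ : Antitone (s ∘ ρ))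
    (j : Fin (n + 1)) : flagPoint s j = flagCoord s ρ j :=
  congrFun (flagCoord_congr (antitone_comp_antiSort s) hρ) j

theorem sdPoint_flagChain_flagPoint {s : Δ n} {ρ : Equiv.Perm (Fin (n + 1))}
    (hρ : Antitone (s ∘ ρ)) : sdPoint (flagChain ρ) (flagPoint s) = s := by
  ext v
  simp only [sdPoint_apply, flagPoint_apply hρ, sum_flagCoord_mul_sdWeight]

theorem continuousOn_flagPoint (ρ : Equiv.Perm (Fin (n + 1))) :
    ContinuousOn flagPoint {s : Δ n | Antitone (s ∘ ρ)} := by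
  rw [Topology.IsInducing.subtypeVal.continuousOn_iff]
  exact (continuous_flagCoord ρ).continuousOn.congr fun s hs => funext (flagPoint_apply hs)

theorem flagPoint_map {φ : Fin (m + 1) → Fin (n + 1)} (hφ : φ.Injective) (hmn : m + 1 ≤ n + 1)
    (s₀ : Δ m) :
    flagPoint (stdSimplex.map φ s₀) = stdSimplex.map (Fin.castLE hmn) (flagPoint s₀) := by
  have hsc := sortedCoord_map hφ (antitone_comp_antiSort s₀)
    (antitone_comp_antiSort (stdSimplex.map φ s₀))
  refine stdSimplex.eq_map_of_comp_eq (Fin.castLE_injective hmn) (fun j => ?_) fun k hk => ?_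
  · rw [flagPoint_apply (antitone_comp_antiSort _), flagPoint_apply (antitone_comp_antiSort _),
      flagCoord, flagCoord, hsc, Fin.val_castLE]
  · have hk' : m + 1 ≤ k := not_lt.mp fun h => hk ⟨⟨k, h⟩, rfl⟩
    rw [flagPoint_apply (antitone_comp_antiSort _), flagCoord, hsc, sortedCoord_of_le _ _ hk',
      sortedCoord_of_le _ _ (hk'.trans (Nat.le_succ _)), sub_zero, mul_zero]

theorem flagChain_eq_filter {s : Δ n} {ρ : Equiv.Perm (Fin (n + 1))} (hρ : Antitone (s ∘ ρ))
    {j : Fin (n + 1)} (hj : flagCoord s ρ j ≠ 0) :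
    (flagChain ρ).1 j = Finset.univ.filter fun v => sortedCoord s ρ j ≤ s v := by
  ext v
  have hv : s v = sortedCoord s ρ (ρ.symm v) := by rw [sortedCoord_val, Equiv.apply_symm_apply]
  rw [mem_flagChain, Finset.mem_filter, hv]
  refine ⟨fun h => ⟨Finset.mem_univ v, antitone_sortedCoord hρ (Fin.le_def.mp h)⟩,
    fun ⟨_, h⟩ => not_lt.mp fun hlt => ?_⟩
  have := antitone_sortedCoord hρ (Nat.succ_le_of_lt (Fin.lt_def.mp hlt))
  linarith [sortedCoord_lt_of_flagCoord_ne_zero hρ hj]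

/-- On the support of the flag coordinates, the flags of `s₀` and of its pushforward along `φ`
consist of superlevel sets, which correspond under `φ`. -/
theorem maxMap_flagChain_map {φ : Fin (m + 1) → Fin (n + 1)} (hφ : StrictMono φ)
    (hmn : m + 1 ≤ n + 1) {s₀ : Δ m} {ρ₀ : Equiv.Perm (Fin (m + 1))}
    {ρ : Equiv.Perm (Fin (n + 1))} (hρ₀ : Antitone (s₀ ∘ ρ₀))
    (hρ : Antitone (stdSimplex.map φ s₀ ∘ ρ)) {j : Fin (m + 1)} (hj : flagCoord s₀ ρ₀ j ≠ 0) :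
    maxMap (flagChain ρ) (Fin.castLE hmn j) = φ (maxMap (flagChain ρ₀) j) := by
  have hsc := sortedCoord_map hφ.injective hρ₀ hρ
  have hj' : flagCoord (stdSimplex.map φ s₀) ρ (Fin.castLE hmn j) ≠ 0 := by
    rwa [flagCoord, hsc, Fin.val_castLE]
  have hpos : 0 < sortedCoord s₀ ρ₀ j :=
    (sortedCoord_nonneg s₀ ρ₀ _).trans_lt (sortedCoord_lt_of_flagCoord_ne_zero hρ₀ hj)
  have hset : (flagChain ρ).1 (Fin.castLE hmn j) = ((flagChain ρ₀).1 j).image φ := by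
    rw [flagChain_eq_filter hρ hj', flagChain_eq_filter hρ₀ hj, hsc, Fin.val_castLE]
    ext v
    simp only [Finset.mem_filter, Finset.mem_univ, true_and, Finset.mem_image]
    constructor
    · intro hv
      obtain ⟨i, rfl⟩ : v ∈ range φ := by_contra fun h => by
        rw [stdSimplex.map_apply_of_notMem_range _ h] at hv
        exact hv.not_gt hpos
      exact ⟨i, by rwa [stdSimplex.map_apply_of_injective hφ.injective] at hv, rfl⟩
    · rintro ⟨i, hi, rfl⟩
      rwa [stdSimplex.map_apply_of_injective hφ.injective]
  change ((flagChain ρ).1 _).max' ((flagChain ρ).2.1 _) =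
    φ (((flagChain ρ₀).1 j).max' ((flagChain ρ₀).2.1 j))
  rw [← Finset.max'_image hφ.monotone _ (hset ▸ (flagChain ρ).2.1 _)]
  congr 1

end Flag

section Homotopy

variable {X : SimpSpace} {m n : ℕ}

theorem joinPoint_flag_map_eq {φ : Fin (m + 1) → Fin (n + 1)} (hφ : StrictMono φ) (x : X.X n)
    (θ : I) {s₀ : Δ m} {ρ₀ : Equiv.Perm (Fin (m + 1))} {ρ : Equiv.Perm (Fin (n + 1))}
    (hρ₀ : Antitone (s₀ ∘ ρ₀)) (hρ : Antitone (stdSimplex.map φ s₀ ∘ ρ)) :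
    joinPoint (maxMap (flagChain ρ₀)) (X.map ⟨φ, hφ.monotone⟩ x) θ (flagPoint s₀) s₀ =
      joinPoint (maxMap (flagChain ρ)) x θ (flagPoint (stdSimplex.map φ s₀))
        (stdSimplex.map φ s₀) := by
  have hmn : m + 1 ≤ n + 1 := Fin.le_of_injective φ hφ.injective
  rw [flagPoint_map hφ.injective hmn]
  exact joinPoint_map_eq hφ (Fin.strictMono_castLE hmn) x fun j hj =>
    maxMap_flagChain_map hφ hmn hρ₀ hρ (by rwa [flagPoint_apply hρ₀] at hj)

noncomputable def sdHomotopy (x : X.X n) (s : Δ n) (θ : I) : FatReal X :=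
  joinPoint (maxMap (flagChain (antiSort s))) x θ (flagPoint s) s

theorem sdHomotopy_eq_joinPoint (x : X.X n) (θ : I) {s : Δ n} {ρ : Equiv.Perm (Fin (n + 1))}
    (hρ : Antitone (s ∘ ρ)) :
    sdHomotopy x s θ = joinPoint (maxMap (flagChain ρ)) x θ (flagPoint s) s := by
  have h := joinPoint_flag_map_eq strictMono_id x θ (antitone_comp_antiSort s) (ρ := ρ)
    (by rwa [stdSimplex.map_id_apply])
  rwa [stdSimplex.map_id_apply, show (⟨id, strictMono_id.monotone⟩ : Fin (n + 1) →o _) =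
    OrderHom.id from rfl, X.map_id] at h

theorem sdHomotopy_map {φ : Fin (m + 1) → Fin (n + 1)} (hφ : StrictMono φ) (x : X.X n) (t : Δ m)
    (θ : I) : sdHomotopy (X.map ⟨φ, hφ.monotone⟩ x) t θ = sdHomotopy x (stdSimplex.map φ t) θ :=
  joinPoint_flag_map_eq hφ x θ (antitone_comp_antiSort t) (antitone_comp_antiSort _)

theorem continuous_sdHomotopy (n : ℕ) :
    Continuous fun q : (X.X n × Δ n) × I => sdHomotopy q.1.1 q.1.2 q.2 := by
  let C (ρ : Equiv.Perm (Fin (n + 1))) : Set ((X.X n × Δ n) × I) :=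
    (fun q => q.1.2 ∘ ρ) ⁻¹' {f | Antitone f}
  refine (locallyFinite_of_finite C).continuous
    (eq_univ_of_forall fun q => mem_iUnion.mpr ⟨_, antitone_comp_antiSort q.1.2⟩)
    (fun ρ => isClosed_antitone.preimage (continuous_pi fun i => (continuous_apply (ρ i)).comp
      (continuous_subtype_val.comp (continuous_snd.comp continuous_fst))))
    fun ρ => ?_
  have hflag : ContinuousOn (fun q : (X.X n × Δ n) × I => flagPoint q.1.2) (C ρ) :=
    (continuousOn_flagPoint ρ).comp (by fun_prop) fun q hq => hq
  refine ((continuous_joinPoint (maxMap (flagChain ρ))).comp_continuousOn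
    ((continuous_fst.comp continuous_fst).continuousOn.prodMk (continuous_snd.continuousOn.prodMk
      (hflag.prodMk (continuous_snd.comp continuous_fst).continuousOn)))).congr fun q hq => ?_
  exact sdHomotopy_eq_joinPoint _ _ hq

variable (X) in
noncomputable def sdHomotopyCurry (n : ℕ) : C(X.X n × Δ n, C(I, FatReal X)) :=
  ContinuousMap.curry ⟨fun q => sdHomotopy q.1.1 q.1.2 q.2, continuous_sdHomotopy n⟩

theorem sdHomotopyCurry_eq_of_fatRel {a b : FatTotal X} (h : fatRel X a b) :
    sdHomotopyCurry X a.1 a.2 = sdHomotopyCurry X b.1 b.2 := by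
  classical
  obtain ⟨m, n, φ, hφ, x, t, t', ht, rfl, rfl⟩ := h
  obtain rfl : t' = stdSimplex.map φ t := by
    ext i
    rw [ht, stdSimplex.map_apply_eq_sum_ite]
  ext θ
  exact sdHomotopy_map hφ x t θ

variable (X) in
noncomputable def fatHomotopy : C(FatReal X, C(I, FatReal X)) :=
  ⟨Quot.lift (fun a => sdHomotopyCurry X a.1 a.2) fun _ _ => sdHomotopyCurry_eq_of_fatRel,
    continuous_quot_lift _ (continuous_sigma fun n => (sdHomotopyCurry X n).continuous)⟩

end Homotopy

/-- for the subdivision map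
`τ : ||X|| → ||X × S||, (x, A₀ ⊂ ... ⊂ A_k, t) ↦ (u*x, |A₀| < ... < |A_k|, t)`
(`u(j) = max A_j`) and the canonical projection `π : ||X × S|| → ||X||`, the
composite `π ∘ τ` is homotopic to the identity of `||X||`. -/
theorem pi_comp_tau_homotopic_id (X : SimpSpace) (τ : C(FatReal X, FatSReal X))
    (hτ : ∀ (n k : ℕ) (x : X.X n) (A : SdChain n k) (t : stdSimplex ℝ (Fin (k + 1))),
      τ (Quot.mk (fatRel X) ⟨n, x, sdPoint A t⟩) =
        Quot.mk (fatSRel X) ⟨k, (X.map (maxMap A) x, cardSeq A), t⟩) :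
    Nonempty (ContinuousMap.Homotopy ((piFat X).comp τ) (ContinuousMap.id (FatReal X))) := by
  refine ⟨⟨⟨fun q => fatHomotopy X q.2 q.1, continuous_eval.comp
    (((fatHomotopy X).continuous.comp continuous_snd).prodMk continuous_fst)⟩, ?_, ?_⟩⟩
  · rintro ⟨n, x, s⟩
    change sdHomotopy x s 0 = piFat X (τ (Quot.mk _ ⟨n, x, s⟩))
    conv_rhs => rw [← sdPoint_flagChain_flagPoint (antitone_comp_antiSort s), hτ]
    exact joinPoint_zero _ x _ s
  · rintro ⟨n, x, s⟩
    exact joinPoint_one _ x _ s
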